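/- (Parallel triangles in type E₈, §4.4.) Let (V₀, …, V₂₉) be any 30-gon of type E8 (the linear relations and central symmetry alone suffice; no convexity is needed) with inner points W_j = V_{j+1} + z_{j+11}. Then V₀ − W₁ = W₂ − W₄ and W₁ − W₃ = W₄ − V₆. Consequently, the triangles △_L with vertices (V₀, W₁, W₃) and △_R with vertices (W₂, W₄, V₆) are translates of one another: △_R = △_L + c with c = W₂ − V₀ = W₄ − W₁ = V₆ − W₃. -/
import Mathlib


noncomputable section

/-- The (strict) total order on `ℂ`: compare imaginary parts first, then real parts. -/
def cLt (a b : ℂ) : Prop := a.im < b.im ∨ (a.im = b.im ∧ a.re < b.re)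

/-- The corresponding non-strict order on `ℂ`. -/
def cLe (a b : ℂ) : Prop := cLt a b ∨ a = b

/-- `cross u v = Im (conj u * v)`. -/
def cross (u v : ℂ) : ℝ := ((starRingEnd ℂ) u * v).im

/-- A positively convex `h`-gon: every other vertex lies strictly to the left of each
directed edge from `V (j-1)` to `V j`. -/
def PosConvex {h : ℕ} (V : ZMod h → ℂ) : Prop :=
  ∀ j i : ZMod h, i ≠ j - 1 → i ≠ j →
    0 < cross (V j - V (j - 1)) (V i - V (j - 1))

/-- The (open) level-`s` diagonal-gon of an `h`-gon. -/
def DiagGon {h : ℕ} (V : ZMod h → ℂ) (s : ℕ) : Set ℂ :=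
  {P : ℂ | ∀ j : ZMod h, 0 < cross (V (j + (s : ZMod h)) - V j) (P - V j)}

/-- Edge vectors of an `h`-gon. -/
def zEdge {h : ℕ} (V : ZMod h → ℂ) (j : ZMod h) : ℂ := V j - V (j - 1)

/-- A 30-gon of type E8. -/
def IsE8Gon (V : ZMod 30 → ℂ) : Prop :=
  (∀ j : ZMod 30, V (j + 15) = -V j) ∧
  (∀ j : ZMod 30, zEdge V j + zEdge V (j + 10) + zEdge V (j + 20) = 0) ∧
  (∀ j : ZMod 30,
    zEdge V j + zEdge V (j + 6) + zEdge V (j + 12) + zEdge V (j + 18) + zEdge V (j + 24) = 0)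

/-- The inner points `W j` of a 30-gon of type E8. -/
def WE8 (V : ZMod 30 → ℂ) (j : ZMod 30) : ℂ := V (j + 1) + zEdge V (j + 11)

/-- A stable 30-gon of type E8. -/
def IsStableE8Gon (V : ZMod 30 → ℂ) : Prop :=
  IsE8Gon V ∧ PosConvex V ∧ ∀ j : ZMod 30, WE8 V j ∈ DiagGon V 5

/-- (Parallel triangles in type `E₈`, §4.4.) In any 30-gon of type `E8`,
`V 0 − W 1 = W 2 − W 4` and `W 1 − W 3 = W 4 − V 6`; hence the triangles
`△_L = (V 0, W 1, W 3)` and `△_R = (W 2, W 4, V 6)` are translates of one another. -/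
theorem e8_parallel_triangles (V : ZMod 30 → ℂ) (hV : IsE8Gon V) :
    V 0 - WE8 V 1 = WE8 V 2 - WE8 V 4 ∧
    WE8 V 1 - WE8 V 3 = WE8 V 4 - V 6 ∧
    ∃ c : ℂ, c = WE8 V 2 - V 0 ∧ c = WE8 V 4 - WE8 V 1 ∧ c = V 6 - WE8 V 3 ∧
      WE8 V 2 = V 0 + c ∧ WE8 V 4 = WE8 V 1 + c ∧ V 6 = WE8 V 3 + c := by
  obtain ⟨hsym, h3, h5⟩ := hV
  have s0 := hsym 0; have s2 := hsym 2; have s3 := hsym 3; have s5 := hsym 5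
  have s6 := hsym 6; have s7 := hsym 7; have s9 := hsym 9; have s10 := hsym 10
  have s14 := hsym 14
  have t0 := h3 0; have t2 := h3 2; have t4 := h3 4
  have f0 := h5 0; have f1 := h5 1
  simp only [zEdge] at t0 t2 t4 f0 f1
  norm_num at s0 s2 s3 s5 s6 s7 s9 s10 s14 t0 t2 t4 f0 f1
  rw [show ((-1 : ZMod 30)) = 29 from by decide] at t0 f0
  have hW1 : WE8 V 1 = V 2 + (V 12 - V 11) := by simp only [WE8, zEdge]; norm_num
  have hW2 : WE8 V 2 = V 3 + (V 13 - V 12) := by simp only [WE8, zEdge]; norm_num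
  have hW3 : WE8 V 3 = V 4 + (V 14 - V 13) := by simp only [WE8, zEdge]; norm_num
  have hW4 : WE8 V 4 = V 5 + (V 15 - V 14) := by simp only [WE8, zEdge]; norm_num
  rw [hW1, hW2, hW3, hW4]
  have eA : V 0 - (V 2 + (V 12 - V 11)) = V 3 + (V 13 - V 12) - (V 5 + (V 15 - V 14)) := by
    linear_combination s0 - s3 + s5 - s6 + s7 - s9 + s10 - s14 - t0 - t2 - f1
  have eB : V 2 + (V 12 - V 11) - (V 4 + (V 14 - V 13)) = V 5 + (V 15 - V 14) - V 6 := by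
    linear_combination -s0 + s2 - s3 + s14 - t4 + f0
  exact ⟨eA, eB, V 3 + (V 13 - V 12) - V 0, by ring, by linear_combination -eA,
    by linear_combination -eA - eB, by linear_combination eA - eA, by linear_combination eA,
    by linear_combination eA + eB⟩
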